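/- Let φ be a parabolic automorphism of D and let ψ be any automorphism of D. If (b_n) is a sequence in D with ψ(φ^[n](b_n)) = 0 for all n ≥ 0, then (b_n) is a Blaschke sequence: ∑_{n=0}^∞ (1 − |b_n|) < ∞. -/

import Mathlib

/-!
In the Cayley coordinate `σ(z) = (w + z)/(w - z)` attached to the boundary fixed point `w`, a
parabolic automorphism becomes a translation `σ ↦ σ + c` along the imaginary axis (`c ≠ 0`,
`Re c = 0`): `w` is a double root of the fixed-point quadratic, because the product of its two
roots has modulus one. Since `ψ` vanishes only at one point `q` of the disc, `φ^[n] (b n) = q`,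
so `σ(b n) = σ(q) - n c` has constant real part, while
`1 - |z|² = 4 Re σ(z) / |σ(z) + 1|²`. Hence `1 - |b n| ≤ 1 - |b n|² = O(1/n²)`.
-/

/-- A (holomorphic) automorphism of the open unit disc `D = {z : |z| < 1}`:
a map of the form `z ↦ λ(z − a)/(1 − conj(a)·z)` with `a ∈ D` and `|λ| = 1`. -/
def IsDiscAut (φ : ℂ → ℂ) : Prop :=
  ∃ a lam : ℂ, ‖a‖ < 1 ∧ ‖lam‖ = 1 ∧
    ∀ z : ℂ, φ z = lam * (z - a) / (1 - (starRingEnd ℂ) a * z)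

/-- An elliptic automorphism: `φ ≠ id` with a fixed point in the open disc. -/
def IsEllipticAut (φ : ℂ → ℂ) : Prop :=
  IsDiscAut φ ∧ φ ≠ id ∧ ∃ a : ℂ, ‖a‖ < 1 ∧ φ a = a

/-- A parabolic automorphism: `φ ≠ id` with exactly one fixed point in the closed disc,
lying on the unit circle. -/
def IsParabolicAut (φ : ℂ → ℂ) : Prop :=
  IsDiscAut φ ∧ φ ≠ id ∧ ∃ w : ℂ, ‖w‖ = 1 ∧
    {z : ℂ | ‖z‖ ≤ 1 ∧ φ z = z} = {w}

/-- A hyperbolic automorphism: `φ ≠ id` with exactly two fixed points in the closed disc,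
both on the unit circle. -/
def IsHyperbolicAut (φ : ℂ → ℂ) : Prop :=
  IsDiscAut φ ∧ φ ≠ id ∧ ∃ w₁ w₂ : ℂ, w₁ ≠ w₂ ∧
    ‖w₁‖ = 1 ∧ ‖w₂‖ = 1 ∧
    {z : ℂ | ‖z‖ ≤ 1 ∧ φ z = z} = {w₁, w₂}

/-- The parabolic automorphism `φ_c(z) = (1 + c − 2z)/(2c − (1 + c)z)` fixing `1`. -/
noncomputable def phiC (c : ℂ) : ℂ → ℂ := fun z => (1 + c - 2 * z) / (2 * c - (1 + c) * z)

/-- The hyperbolic automorphism `ψ_r(z) = (z − r)/(1 − r z)` fixing `−1` and `1`. -/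
noncomputable def psiR (r : ℝ) : ℂ → ℂ := fun z => (z - (r : ℂ)) / (1 - (r : ℂ) * z)


open ComplexConjugate Metric Set Filter

noncomputable def discAut (a lam z : ℂ) : ℂ := lam * (z - a) / (1 - conj a * z)

noncomputable def cayley (w z : ℂ) : ℂ := (w + z) / (w - z)

section DiscAut

variable {a lam z : ℂ}

lemma one_sub_conj_mul_ne_zero (ha : ‖a‖ < 1) (hz : ‖z‖ ≤ 1) : 1 - conj a * z ≠ 0 := by
  refine sub_ne_zero.2 fun h => ?_
  have : ‖conj a * z‖ < 1 := by
    rw [norm_mul, Complex.norm_conj]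
    calc ‖a‖ * ‖z‖ ≤ ‖a‖ := mul_le_of_le_one_right (norm_nonneg a) hz
      _ < 1 := ha
  simp [← h] at this

lemma normSq_one_sub_conj_mul_sub_normSq_sub (a z : ℂ) :
    Complex.normSq (1 - conj a * z) - Complex.normSq (z - a)
      = (1 - Complex.normSq a) * (1 - Complex.normSq z) := by
  simp only [Complex.normSq_apply, Complex.sub_re, Complex.sub_im, Complex.mul_re,
    Complex.mul_im, Complex.one_re, Complex.one_im, Complex.conj_re, Complex.conj_im]
  ring

lemma mapsTo_discAut_ball (ha : ‖a‖ < 1) (hl : ‖lam‖ = 1) :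
    MapsTo (discAut a lam) (ball 0 1) (ball 0 1) := by
  intro z hz
  rw [mem_ball_zero_iff] at hz ⊢
  have hden := one_sub_conj_mul_ne_zero ha hz.le
  rw [discAut, norm_div, norm_mul, hl, one_mul, div_lt_one (norm_pos_iff.2 hden),
    ← sq_lt_sq₀ (norm_nonneg _) (norm_nonneg _), Complex.sq_norm, Complex.sq_norm,
    ← sub_pos, normSq_one_sub_conj_mul_sub_normSq_sub]
  have h1 : Complex.normSq a < 1 := by rw [← Complex.sq_norm]; nlinarith [norm_nonneg a]
  have h2 : Complex.normSq z < 1 := by rw [← Complex.sq_norm]; nlinarith [norm_nonneg z]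
  nlinarith

lemma discAut_eq_zero_iff (ha : ‖a‖ < 1) (hl : lam ≠ 0) (hz : ‖z‖ ≤ 1) :
    discAut a lam z = 0 ↔ z = a := by
  simp [discAut, one_sub_conj_mul_ne_zero ha hz, hl, sub_eq_zero]

lemma discAut_eq_self_iff (ha : ‖a‖ < 1) (hz : ‖z‖ ≤ 1) :
    discAut a lam z = z ↔ conj a * z ^ 2 + (lam - 1) * z - lam * a = 0 := by
  rw [discAut, div_eq_iff (one_sub_conj_mul_ne_zero ha hz)]
  constructor <;> intro h <;> linear_combination h

end DiscAut

lemma exists_fixedPoly_root_vieta {a lam w : ℂ} (ha : a ≠ 0)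
    (hw : conj a * w ^ 2 + (lam - 1) * w - lam * a = 0) :
    ∃ w', conj a * w' ^ 2 + (lam - 1) * w' - lam * a = 0 ∧
      conj a * (w + w') = 1 - lam ∧ conj a * (w * w') = -(lam * a) := by
  obtain ⟨w', hw'⟩ : ∃ w', conj a * w' = 1 - lam - conj a * w :=
    ⟨(1 - lam) / conj a - w, by rw [mul_sub, mul_div_cancel₀ _ ((map_ne_zero _).2 ha)]⟩
  refine ⟨w', ?_, ?_, ?_⟩
  · apply mul_left_cancel₀ ((map_ne_zero (starRingEnd ℂ)).2 ha)
    linear_combination (conj a * w' - conj a * w) * hw' + conj a * hw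
  · linear_combination hw'
  · linear_combination w * hw' - hw

lemma cayley_discAut {a lam w z : ℂ} (hlam : lam = 1 - 2 * (conj a * w))
    (hww : conj a * (w * w) = -(lam * a)) (hwz : w ≠ z)
    (hz : 1 - conj a * z ≠ 0) (hw : 1 - conj a * w ≠ 0) :
    cayley w (discAut a lam z) = cayley w z + 2 * (conj a * w) / (1 - conj a * w) := by
  have hsub : (w - discAut a lam z) * (1 - conj a * z) = (1 - conj a * w) * (w - z) := by
    rw [discAut, sub_mul, div_mul_cancel₀ _ hz]
    linear_combination (-z) * hlam + hww
  have hadd : (w + discAut a lam z) * (1 - conj a * z)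
      = (1 + conj a * w) * w + (1 - 3 * (conj a * w)) * z := by
    rw [discAut, add_mul, div_mul_cancel₀ _ hz]
    linear_combination z * hlam - hww
  have hwz' : w - z ≠ 0 := sub_ne_zero.2 hwz
  have hne : w - discAut a lam z ≠ 0 := by
    intro h
    rw [h, zero_mul] at hsub
    exact mul_ne_zero hw hwz' hsub.symm
  rw [cayley, cayley, div_add_div _ _ hwz' hw, div_eq_div_iff hne (mul_ne_zero hwz' hw)]
  apply mul_right_cancel₀ hz
  linear_combination ((w - z) * (1 - conj a * w)) * hadd
    - ((w + z) * (1 - conj a * w) + (w - z) * (2 * (conj a * w))) * hsub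

lemma re_two_mul_div_one_sub_eq_zero {β : ℂ} (hβ : ‖1 - 2 * β‖ = 1) :
    (2 * β / (1 - β)).re = 0 := by
  have h : Complex.normSq (1 - 2 * β) = 1 := by rw [← Complex.sq_norm, hβ, one_pow]
  simp only [Complex.normSq_apply, Complex.sub_re, Complex.sub_im, Complex.mul_re,
    Complex.mul_im, Complex.one_re, Complex.one_im, Complex.re_ofNat, Complex.im_ofNat] at h
  simp only [Complex.div_re, Complex.mul_re, Complex.mul_im, Complex.sub_re, Complex.sub_im,
    Complex.one_re, Complex.one_im, Complex.re_ofNat, Complex.im_ofNat, ← add_div]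
  apply div_eq_zero_iff.2 (Or.inl ?_)
  linear_combination -h / 2

theorem IsParabolicAut.exists_cayley_translation {φ : ℂ → ℂ} (hφ : IsParabolicAut φ) :
    ∃ w c : ℂ, ‖w‖ = 1 ∧ c ≠ 0 ∧ c.re = 0 ∧ MapsTo φ (ball 0 1) (ball 0 1) ∧
      ∀ z ∈ ball (0 : ℂ) 1, cayley w (φ z) = cayley w z + c := by
  obtain ⟨⟨a, lam, ha, hl, hφa⟩, -, w, hw, hfix⟩ := hφ
  obtain rfl : φ = discAut a lam := funext hφa
  have hfixed : ∀ z, ‖z‖ ≤ 1 → (discAut a lam z = z ↔ z = w) := fun z hz => by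
    simpa [hz] using Set.ext_iff.1 hfix z
  have hw0 : w ≠ 0 := by rintro rfl; simp at hw
  have ha0 : a ≠ 0 := by
    rintro rfl
    exact hw0 ((hfixed 0 (by simp)).1 (by simp [discAut])).symm
  -- The second root `w'` has `|w'| = |λ a| / |a w| = 1`, so uniqueness forces the double root `w`.
  obtain ⟨w', hw'root, hsum, hprod⟩ := exists_fixedPoly_root_vieta ha0
    ((discAut_eq_self_iff ha hw.le).1 ((hfixed w hw.le).2 rfl))
  have hw'norm : ‖w'‖ = 1 := by
    have h := congrArg norm hprod
    rw [norm_mul, norm_mul, norm_neg, norm_mul, Complex.norm_conj, hw, one_mul, hl, one_mul]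
      at h
    exact mul_left_cancel₀ (norm_ne_zero_iff.2 ha0) (h.trans (mul_one _).symm)
  have hw'w : w' = w := (hfixed w' hw'norm.le).1 ((discAut_eq_self_iff ha hw'norm.le).2 hw'root)
  rw [hw'w] at hsum hprod
  have hlam : lam = 1 - 2 * (conj a * w) := by linear_combination hsum
  have hden : 1 - conj a * w ≠ 0 := one_sub_conj_mul_ne_zero ha hw.le
  refine ⟨w, 2 * (conj a * w) / (1 - conj a * w), hw, ?_,
    re_two_mul_div_one_sub_eq_zero (hlam ▸ hl), mapsTo_discAut_ball ha hl, fun z hz => ?_⟩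
  · exact div_ne_zero (mul_ne_zero two_ne_zero (mul_ne_zero ((map_ne_zero _).2 ha0) hw0)) hden
  · rw [mem_ball_zero_iff] at hz
    refine cayley_discAut hlam hprod ?_ (one_sub_conj_mul_ne_zero ha hz.le) hden
    rintro rfl
    exact hz.ne hw

lemma apply_iterate_eq_add_nsmul {α M : Type*} [AddMonoid M] {f : α → α} {g : α → M}
    {s : Set α} {c : M} (hf : MapsTo f s s) (hg : ∀ x ∈ s, g (f x) = g x + c) (n : ℕ) :
    ∀ x ∈ s, g (f^[n] x) = g x + n • c := by
  induction n with
  | zero => simp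
  | succ n ih =>
    intro x hx
    rw [Function.iterate_succ_apply', hg _ (hf.iterate n hx), ih x hx, succ_nsmul, add_assoc]

lemma re_cayley {w z : ℂ} (hw : ‖w‖ = 1) :
    (cayley w z).re = (1 - Complex.normSq z) / Complex.normSq (w - z) := by
  have hns : Complex.normSq w = 1 := by rw [← Complex.sq_norm, hw, one_pow]
  rw [cayley, Complex.div_re, ← add_div]
  congr 1
  simp only [Complex.add_re, Complex.add_im, Complex.sub_re, Complex.sub_im,
    Complex.normSq_apply] at hns ⊢
  linear_combination hns

lemma one_sub_normSq_eq {w z : ℂ} (hw : ‖w‖ = 1) (hz : z ≠ w) :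
    1 - Complex.normSq z = 4 * (cayley w z).re / Complex.normSq (cayley w z + 1) := by
  have hns : Complex.normSq w = 1 := by rw [← Complex.sq_norm, hw, one_pow]
  have hwz : w - z ≠ 0 := sub_ne_zero.2 hz.symm
  have hadd : cayley w z + 1 = 2 * w / (w - z) := by
    rw [cayley]; field_simp; ring
  have hpos : Complex.normSq (w - z) ≠ 0 := Complex.normSq_pos.2 hwz |>.ne'
  rw [re_cayley hw, hadd, Complex.normSq_div, Complex.normSq_mul, hns, Complex.normSq_ofNat]
  field_simp
  norm_num

lemma summable_inv_normSq_add_nat_mul (d : ℂ) {c : ℂ} (hc : c ≠ 0) :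
    Summable fun n : ℕ => (Complex.normSq (d + n * c))⁻¹ := by
  have hc' : 0 < ‖c‖ := norm_pos_iff.2 hc
  refine Summable.of_norm_bounded_eventually_nat
    ((Real.summable_nat_pow_inv.2 one_lt_two).mul_left (4 / ‖c‖ ^ 2)) ?_
  filter_upwards [eventually_gt_atTop ⌈2 * ‖d‖ / ‖c‖⌉₊] with n hn
  have hn' : 2 * ‖d‖ < n * ‖c‖ := (div_lt_iff₀ hc').1 (Nat.lt_of_ceil_lt hn)
  have hlow : n * ‖c‖ / 2 ≤ ‖d + n * c‖ := by
    have := norm_sub_norm_le (n * c) (-d)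
    rw [norm_neg, sub_neg_eq_add, add_comm, norm_mul, Complex.norm_natCast] at this
    linarith
  have hpos : 0 < n * ‖c‖ / 2 := by linarith [norm_nonneg d]
  rw [Real.norm_eq_abs, abs_inv, Complex.normSq_eq_norm_sq, abs_pow, abs_norm]
  calc (‖d + n * c‖ ^ 2)⁻¹ ≤ ((n * ‖c‖ / 2) ^ 2)⁻¹ :=
        inv_anti₀ (by positivity) (pow_le_pow_left₀ hpos.le hlow 2)
    _ = 4 / ‖c‖ ^ 2 * ((n : ℝ) ^ 2)⁻¹ := by
        have : (n : ℝ) ≠ 0 := by rintro h; simp [h] at hpos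
        field_simp
        ring

/-- If `φ` is parabolic, `ψ` is any disc automorphism, and `(b_n)` in `D`
satisfies `ψ(φ^[n](b_n)) = 0` for all `n`, then `(b_n)` is a Blaschke sequence. -/
theorem stmt_16 (φ ψ : ℂ → ℂ) (hφ : IsParabolicAut φ) (hψ : IsDiscAut ψ)
    (b : ℕ → ℂ) (hb : ∀ n : ℕ, ‖b n‖ < 1)
    (hzero : ∀ n : ℕ, ψ (φ^[n] (b n)) = 0) :
    Summable (fun n : ℕ => 1 - ‖b n‖) := by
  obtain ⟨w, c, hw, hc, hcre, hmaps, hcay⟩ := hφ.exists_cayley_translation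
  obtain ⟨q, mu, hq, hmu, hψq⟩ := hψ
  obtain rfl : ψ = discAut q mu := funext hψq
  have hb' : ∀ n, b n ∈ ball (0 : ℂ) 1 := fun n => mem_ball_zero_iff.2 (hb n)
  have horbit : ∀ n, φ^[n] (b n) = q := fun n =>
    (discAut_eq_zero_iff hq (norm_ne_zero_iff.1 (hmu ▸ one_ne_zero))
      (mem_ball_zero_iff.1 (hmaps.iterate n (hb' n))).le).1 (hzero n)
  set s := cayley w q
  -- The shape `d + n * c'` of `summable_inv_normSq_add_nat_mul`, with `d = s + 1`, `c' = -c`.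
  have hcayb : ∀ n : ℕ, cayley w (b n) = s + 1 + n * -c - 1 := fun n => by
    have := apply_iterate_eq_add_nsmul hmaps hcay n (b n) (hb' n)
    rw [horbit, nsmul_eq_mul] at this
    linear_combination -this
  refine Summable.of_nonneg_of_le (fun n => sub_nonneg.2 (hb n).le) (fun n => ?_)
    ((summable_inv_normSq_add_nat_mul (s + 1) (neg_ne_zero.2 hc)).mul_left (4 * s.re))
  have hbn := hb n
  calc 1 - ‖b n‖ ≤ 1 - Complex.normSq (b n) := by
        rw [Complex.normSq_eq_norm_sq]; nlinarith [norm_nonneg (b n)]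
    _ = 4 * s.re * (Complex.normSq (s + 1 + n * -c))⁻¹ := by
        rw [one_sub_normSq_eq hw (by rintro rfl; exact hbn.ne hw), hcayb]
        simp [hcre, div_eq_mul_inv]
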